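/- arXiv:0803.2570 — 2 statements merged into one kernel-verified Lean document; each statement's English description precedes it below -/
import Mathlib

section
/- The lower bound E_fa,l on the false alarm exponent strictly exceeds the channel capacity: for a DMC W with all-positive entries, capacity-achieving input distribution P_X* and induced output distribution P_Y*, we have max_{i∈X} min{ D(V‖W|P_X*) : V channel with Σ_j V(·|j)P_X*(j) = W(·|i) } > max_{i∈X} D(W(·|i) ‖ P_Y*) whenever W(·|i) ≠ P_Y* for the maximizing i. -/
/-!
For a capacity-achieving `P*`, perturbing `P*` towards the point mass at `j` gains
`t (D(W j ‖ P_Y*) - I(P*))` in mutual information to first order, while the output divergence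
it loses is `O(t²)` by the `χ²` bound; this gives the KKT inequality `D(W j ‖ P_Y*) ≤ I(P*)`,
with equality wherever `P*` is positive. So the left side is `I(P*) = D(W x₀ ‖ P_Y*)` for any
`x₀` with `P* x₀ > 0`.

For the right side at `x₀`, put `c = W x₀ / P_Y*`. Any `V` with `∑ₓ P* x V x = W x₀` satisfies
`∑ₓ P* x D(V x ‖ W x) = D(W x₀ ‖ P_Y*) + ∑ₓ P* x D(V x ‖ W x c)`, where the unnormalized weights
`W x c` have mass `mₓ` with `∑ₓ P* x mₓ = 1`. Gibbs' inequality gives `D(V x ‖ W x c) ≥ 1 - mₓ`,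
and `≥ -log mₓ` at `x₀`, where `m_{x₀} = 1 + χ²(W x₀ ‖ P_Y*) > 1` because `W x₀ ≠ P_Y*`. The
strict gap is `P* x₀ (χ² - log (1 + χ²)) > 0`.
-/

open Finset Real Filter Topology

namespace FiniteInformation

variable {X Y : Type*} [Fintype X]

lemma nonpos_of_forall_le_mul {a K : ℝ} (h : ∀ t : ℝ, 0 < t → t ≤ 1 → a ≤ t * K) : a ≤ 0 := by
  have hlim : Tendsto (fun t : ℝ => t * K) (𝓝[>] 0) (𝓝 0) :=
    ((continuous_mul_const K).tendsto' 0 0 (zero_mul K)).mono_left nhdsWithin_le_nhds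
  refine ge_of_tendsto hlim ?_
  filter_upwards [Ioo_mem_nhdsGT one_pos] with t ht using h t ht.1 ht.2.le

lemma exists_pos_of_sum_eq_one {P : X → ℝ} (hP1 : ∑ x, P x = 1) : ∃ x, 0 < P x := by
  obtain ⟨x, -, hx⟩ := exists_lt_of_sum_lt (f := 0) (by simp [hP1] : ∑ x, (0 : X → ℝ) x < ∑ x, P x)
  exact ⟨x, hx⟩

lemma sum_mul_add_mul_sub_le {P f g : X → ℝ} (hP : ∀ x, 0 ≤ P x) (hfg : ∀ x, f x ≤ g x) {i : X}
    {a : ℝ} (hi : a ≤ g i) : ∑ x, P x * f x + P i * (a - f i) ≤ ∑ x, P x * g x := by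
  have h := single_le_sum (fun x _ => mul_nonneg (hP x) (sub_nonneg.2 (hfg x))) (mem_univ i)
  simp only [mul_sub, sum_sub_distrib] at h
  nlinarith [mul_le_mul_of_nonneg_left hi (hP i)]

noncomputable def outputDist (P : X → ℝ) (W : X → Y → ℝ) (y : Y) : ℝ := ∑ x, P x * W x y

lemma outputDist_pos {P : X → ℝ} {W : X → Y → ℝ} (hW : ∀ x y, 0 < W x y) (hP : ∀ x, 0 ≤ P x)
    (hP1 : ∑ x, P x = 1) (y : Y) :
    0 < outputDist P W y := by
  obtain ⟨x, hx⟩ := exists_pos_of_sum_eq_one hP1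
  exact sum_pos' (fun x _ => mul_nonneg (hP x) (hW x y).le) ⟨x, mem_univ x, mul_pos hx (hW x y)⟩

variable [Fintype Y]

noncomputable def relEntropy (p q : Y → ℝ) : ℝ := ∑ y, p y * log (p y / q y)

noncomputable def chiSq (p q : Y → ℝ) : ℝ := ∑ y, (p y - q y) ^ 2 / q y

noncomputable def mutualInfo (P : X → ℝ) (W : X → Y → ℝ) : ℝ :=
  ∑ x, P x * relEntropy (W x) (outputDist P W)

lemma sub_le_mul_log_div {a b : ℝ} (ha : 0 ≤ a) (hb : 0 < b) : a - b ≤ a * log (a / b) := by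
  have h := mul_nonneg hb.le (InformationTheory.klFun_nonneg (div_nonneg ha hb.le))
  rw [InformationTheory.klFun] at h
  field_simp at h
  linarith

lemma mul_log_div_le {a b : ℝ} (ha : 0 ≤ a) (hb : 0 < b) : a * log (a / b) ≤ a * (a / b - 1) := by
  rcases ha.eq_or_lt with rfl | ha
  · simp
  · exact mul_le_mul_of_nonneg_left (log_le_sub_one_of_pos (div_pos ha hb)) ha.le

lemma relEntropy_mul_right (p : Y → ℝ) {q c : Y → ℝ} (hq : ∀ y, q y ≠ 0) (hc : ∀ y, c y ≠ 0) :
    relEntropy p (fun y => q y * c y) = relEntropy p q - ∑ y, p y * log (c y) := by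
  rw [relEntropy, relEntropy, ← sum_sub_distrib]
  refine sum_congr rfl fun y _ => ?_
  rcases eq_or_ne (p y) 0 with hp | hp
  · simp [hp]
  · rw [← div_div, log_div (div_ne_zero hp (hq y)) (hc y), mul_sub]

lemma one_sub_sum_le_relEntropy {p q : Y → ℝ} (hp : ∀ y, 0 ≤ p y) (hp1 : ∑ y, p y = 1)
    (hq : ∀ y, 0 < q y) : 1 - ∑ y, q y ≤ relEntropy p q := by
  rw [← hp1, ← sum_sub_distrib]
  exact sum_le_sum fun y _ => sub_le_mul_log_div (hp y) (hq y)

lemma neg_log_sum_le_relEntropy {p q : Y → ℝ} (hp : ∀ y, 0 ≤ p y) (hp1 : ∑ y, p y = 1)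
    (hq : ∀ y, 0 < q y) : -log (∑ y, q y) ≤ relEntropy p q := by
  set s := ∑ y, q y
  have hs : 0 < s := sum_pos (fun y _ => hq y) (nonempty_of_sum_ne_zero (f := p) (by simp [hp1]))
  have h := one_sub_sum_le_relEntropy hp hp1 fun y => mul_pos (hq y) (inv_pos.2 hs)
  rw [relEntropy_mul_right p (fun y => (hq y).ne') fun _ => (inv_pos.2 hs).ne', ← sum_mul,
    mul_inv_cancel₀ hs.ne', ← sum_mul, hp1, log_inv] at h
  linarith

lemma relEntropy_le_chiSq {p q : Y → ℝ} (hp : ∀ y, 0 ≤ p y) (hq : ∀ y, 0 < q y)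
    (hpq : ∑ y, p y = ∑ y, q y) : relEntropy p q ≤ chiSq p q := by
  have h : chiSq p q = ∑ y, p y * (p y / q y - 1) := by
    have hterm : ∀ y, (p y - q y) ^ 2 / q y = p y * (p y / q y - 1) - (p y - q y) := by
      intro y
      field_simp [(hq y).ne']
    rw [chiSq, sum_congr rfl fun y _ => hterm y, sum_sub_distrib, sum_sub_distrib, hpq]
    ring
  rw [h]
  exact sum_le_sum fun y _ => mul_log_div_le (hp y) (hq y)

lemma chiSq_mix (p q : Y → ℝ) (t : ℝ) :
    chiSq (fun y => (1 - t) * q y + t * p y) q = t ^ 2 * chiSq p q := by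
  rw [chiSq, chiSq, mul_sum]
  exact sum_congr rfl fun y _ => by ring

lemma chiSq_pos {p q : Y → ℝ} (hq : ∀ y, 0 < q y) (hpq : p ≠ q) : 0 < chiSq p q := by
  obtain ⟨y, hy⟩ := Function.ne_iff.1 hpq
  exact sum_pos' (fun y _ => div_nonneg (sq_nonneg _) (hq y).le)
    ⟨y, mem_univ y, div_pos (pow_two_pos_of_ne_zero (sub_ne_zero.2 hy)) (hq y)⟩

section Channel

variable {W : X → Y → ℝ} {P : X → ℝ}

lemma mutualInfo_eq_sum_sum (P : X → ℝ) (W : X → Y → ℝ) :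
    mutualInfo P W = ∑ x, ∑ y, P x * W x y * log (W x y / ∑ x', P x' * W x' y) := by
  simp only [mutualInfo, relEntropy, outputDist, mul_sum, mul_assoc]

lemma sum_outputDist (hW1 : ∀ x, ∑ y, W x y = 1) (hP1 : ∑ x, P x = 1) :
    ∑ y, outputDist P W y = 1 := by
  simp only [outputDist]
  rw [sum_comm]
  simp [← mul_sum, hW1, hP1]

lemma mutualInfo_eq_sum_relEntropy_sub (hW : ∀ x y, 0 < W x y)
    (hPW : ∀ y, 0 < outputDist P W y) {r : Y → ℝ} (hr : ∀ y, 0 < r y) :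
    mutualInfo P W = ∑ x, P x * relEntropy (W x) r - relEntropy (outputDist P W) r := by
  have hsplit : ∀ x y, W x y * log (W x y / outputDist P W y)
      = W x y * log (W x y / r y) - W x y * log (outputDist P W y / r y) := by
    intro x y
    rw [log_div (hW x y).ne' (hPW y).ne', log_div (hW x y).ne' (hr y).ne',
      log_div (hPW y).ne' (hr y).ne']
    ring
  have hout : ∑ x, P x * ∑ y, W x y * log (outputDist P W y / r y)
      = relEntropy (outputDist P W) r := by
    simp only [relEntropy, mul_sum]
    rw [sum_comm]
    refine sum_congr rfl fun y _ => ?_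
    simp only [outputDist, sum_mul, mul_assoc]
  rw [← hout]
  simp only [mutualInfo, relEntropy, hsplit, sum_sub_distrib, mul_sub]

theorem relEntropy_le_mutualInfo_of_capacity_achieving (hW : ∀ x y, 0 < W x y)
    (hW1 : ∀ x, ∑ y, W x y = 1) (hP : ∀ x, 0 ≤ P x) (hP1 : ∑ x, P x = 1)
    (hmax : ∀ Q : X → ℝ, (∀ x, 0 ≤ Q x) → ∑ x, Q x = 1 → mutualInfo Q W ≤ mutualInfo P W)
    (j : X) : relEntropy (W j) (outputDist P W) ≤ mutualInfo P W := by
  classical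
  set r := outputDist P W
  have hr := outputDist_pos hW hP hP1
  suffices ∀ t : ℝ, 0 < t → t ≤ 1 → relEntropy (W j) r - mutualInfo P W ≤ t * chiSq (W j) r by
    linarith [nonpos_of_forall_le_mul this]
  intro t ht0 ht1
  set Q : X → ℝ := fun x => (1 - t) * P x + t * (Pi.single j 1 : X → ℝ) x
  have hQ : ∀ f : X → ℝ, ∑ x, Q x * f x = (1 - t) * ∑ x, P x * f x + t * f j := by
    intro f
    simp [Q, add_mul, sum_add_distrib, mul_sum, mul_assoc, Pi.single_apply]
  have hQ0 : ∀ x, 0 ≤ Q x := fun x =>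
    add_nonneg (mul_nonneg (sub_nonneg.2 ht1) (hP x))
      (mul_nonneg ht0.le ((Pi.single_nonneg.2 zero_le_one : (0 : X → ℝ) ≤ Pi.single j 1) x))
  have hQ1 : ∑ x, Q x = 1 := by simpa [hP1] using hQ 1
  have hQW : outputDist Q W = fun y => (1 - t) * r y + t * W j y := funext fun y => hQ (W · y)
  have hchi : relEntropy (outputDist Q W) r ≤ t ^ 2 * chiSq (W j) r := by
    rw [hQW, ← chiSq_mix]
    refine relEntropy_le_chiSq (fun y => ?_) hr ?_
    · exact add_nonneg (mul_nonneg (sub_nonneg.2 ht1) (hr y).le) (mul_nonneg ht0.le (hW j y).le)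
    · simp [sum_add_distrib, ← mul_sum, hW1, r, sum_outputDist hW1 hP1]
  have hI := mutualInfo_eq_sum_relEntropy_sub hW (outputDist_pos hW hQ0 hQ1) hr
  rw [hQ, ← mutualInfo] at hI
  have hmaxQ := hmax Q hQ0 hQ1
  have h : t * (relEntropy (W j) r - mutualInfo P W) ≤ t * (t * chiSq (W j) r) := by nlinarith
  exact le_of_mul_le_mul_left h ht0

lemma mutualInfo_le_relEntropy_of_pos (hP : ∀ x, 0 ≤ P x) (hP1 : ∑ x, P x = 1)
    (hKKT : ∀ j, relEntropy (W j) (outputDist P W) ≤ mutualInfo P W) {x : X} (hx : 0 < P x) :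
    mutualInfo P W ≤ relEntropy (W x) (outputDist P W) := by
  have h := sum_mul_add_mul_sub_le (i := x) hP hKKT le_rfl
  rw [← sum_mul, hP1, one_mul] at h
  change mutualInfo P W + _ ≤ _ at h
  nlinarith

theorem relEntropy_add_mul_chiSq_sub_log_le (hW : ∀ x y, 0 < W x y)
    (hW1 : ∀ x, ∑ y, W x y = 1) (hP : ∀ x, 0 ≤ P x) (hP1 : ∑ x, P x = 1) {V : X → Y → ℝ}
    (hV : ∀ x y, 0 ≤ V x y) (hV1 : ∀ x, ∑ y, V x y = 1) {i : X} (hVi : ∀ y, ∑ x, P x * V x y = W i y) :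
    relEntropy (W i) (outputDist P W) + P i * (chiSq (W i) (outputDist P W)
        - log (1 + chiSq (W i) (outputDist P W)))
      ≤ ∑ x, P x * relEntropy (V x) (W x) := by
  set r := outputDist P W
  have hr := outputDist_pos hW hP hP1
  set c : Y → ℝ := fun y => W i y / r y
  have hc : ∀ y, 0 < c y := fun y => div_pos (hW i y) (hr y)
  set m : X → ℝ := fun x => ∑ y, W x y * c y
  have hm : ∑ x, P x * m x = 1 := by
    simp only [m, mul_sum]
    rw [sum_comm, ← hW1 i]
    refine sum_congr rfl fun y _ => ?_
    simp only [← mul_assoc, ← sum_mul]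
    exact mul_div_cancel₀ _ (hr y).ne'
  have hmi : m i = 1 + chiSq (W i) r := by
    have hterm : ∀ y, W i y * c y = (W i y - r y) ^ 2 / r y + (2 * W i y - r y) := by
      intro y
      have hry : r y ≠ 0 := (hr y).ne'
      simp only [c]
      field_simp
      ring
    simp only [m, chiSq, hterm, sum_add_distrib, sum_sub_distrib, ← mul_sum, hW1,
      sum_outputDist hW1 hP1, r]
    ring
  have hD : relEntropy (W i) r = ∑ x, P x * ∑ y, V x y * log (c y) := by
    calc relEntropy (W i) r = ∑ y, (∑ x, P x * V x y) * log (c y) := by simp only [hVi]; rfl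
      _ = ∑ x, P x * ∑ y, V x y * log (c y) := by
        simp only [sum_mul, mul_sum, mul_assoc]
        exact sum_comm
  have hsplit : ∀ x, relEntropy (V x) (W x)
      = ∑ y, V x y * log (c y) + relEntropy (V x) (fun y => W x y * c y) := fun x => by
    rw [relEntropy_mul_right _ (fun y => (hW x y).ne') fun y => (hc y).ne']
    ring
  have hgibbs : ∑ x, P x * (1 - m x) + P i * (-log (m i) - (1 - m i))
      ≤ ∑ x, P x * relEntropy (V x) (fun y => W x y * c y) := sum_mul_add_mul_sub_le hP
    (fun x => one_sub_sum_le_relEntropy (hV x) (hV1 x) fun y => mul_pos (hW x y) (hc y))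
    (neg_log_sum_le_relEntropy (hV i) (hV1 i) fun y => mul_pos (hW i y) (hc y))
  simp only [hsplit, mul_add, sum_add_distrib, ← hD]
  simp only [mul_sub, mul_one, sum_sub_distrib, hP1, hm] at hgibbs
  rw [show chiSq (W i) r = m i - 1 by linarith, add_sub_cancel]
  linarith

end Channel

end FiniteInformation

open FiniteInformation

/-- The lower bound `E_fa,l` on the false alarm exponent strictly
exceeds the capacity expression `max_i D(W(·|i) ‖ P_Y*)`, provided every maximizer
`i` of the latter has `W(·|i) ≠ P_Y*`.  Here `P_X*` is a capacity-achieving input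
distribution and `P_Y*` the induced output distribution. -/
theorem stmt_3 {X Y : Type*} [Fintype X] [Fintype Y] [Nonempty X]
    (W : X → Y → ℝ) (hW : ∀ x y, 0 < W x y) (hWrow : ∀ x, ∑ y, W x y = 1)
    (Pstar : X → ℝ) (hPnn : ∀ x, 0 ≤ Pstar x) (hPsum : ∑ x, Pstar x = 1)
    (PYstar : Y → ℝ) (hPY : ∀ y, PYstar y = ∑ x, Pstar x * W x y)
    -- `Pstar` achieves capacity:
    (hcap : ∀ Q : X → ℝ, (∀ x, 0 ≤ Q x) → ∑ x, Q x = 1 →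
      ∑ x, ∑ y, Q x * W x y * Real.log (W x y / ∑ x', Q x' * W x' y)
        ≤ ∑ x, ∑ y, Pstar x * W x y * Real.log (W x y / ∑ x', Pstar x' * W x' y))
    -- every maximizer `i` of `D(W(·|i) ‖ P_Y*)` satisfies `W(·|i) ≠ P_Y*`:
    (hneq : ∀ i : X,
      (∀ j : X, ∑ y, W j y * Real.log (W j y / PYstar y)
          ≤ ∑ y, W i y * Real.log (W i y / PYstar y)) →
      (fun y => W i y) ≠ PYstar) :
    Finset.univ.sup' Finset.univ_nonempty
        (fun i : X => ∑ y, W i y * Real.log (W i y / PYstar y))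
      < Finset.univ.sup' Finset.univ_nonempty (fun i : X =>
          sInf { d : ℝ | ∃ V : X → Y → ℝ,
            (∀ x y, 0 ≤ V x y) ∧ (∀ x, ∑ y, V x y = 1) ∧
            (∀ y, ∑ x, Pstar x * V x y = W i y) ∧
            d = ∑ x, Pstar x * ∑ y, V x y * Real.log (V x y / W x y) }) := by
  obtain rfl : PYstar = outputDist Pstar W := funext hPY
  have hmax : ∀ Q : X → ℝ, (∀ x, 0 ≤ Q x) → ∑ x, Q x = 1 →
      mutualInfo Q W ≤ mutualInfo Pstar W := by
    simpa only [← mutualInfo_eq_sum_sum] using hcap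
  have hKKT := relEntropy_le_mutualInfo_of_capacity_achieving hW hWrow hPnn hPsum hmax
  obtain ⟨x₀, hx₀⟩ := exists_pos_of_sum_eq_one hPsum
  have hx₀max := mutualInfo_le_relEntropy_of_pos hPnn hPsum hKKT hx₀
  have hχ : 0 < chiSq (W x₀) (outputDist Pstar W) :=
    chiSq_pos (outputDist_pos hW hPnn hPsum) (hneq x₀ fun j => (hKKT j).trans hx₀max)
  have hlog := log_lt_sub_one_of_pos (by linarith : 0 < 1 + chiSq (W x₀) (outputDist Pstar W))
    (by linarith)
  refine lt_of_lt_of_le ?_ (le_sup' _ (mem_univ x₀))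
  calc _ ≤ mutualInfo Pstar W := sup'_le _ _ fun j _ => hKKT j
    _ < relEntropy (W x₀) (outputDist Pstar W) + Pstar x₀ * (chiSq (W x₀) (outputDist Pstar W)
          - log (1 + chiSq (W x₀) (outputDist Pstar W))) := by nlinarith
    _ ≤ _ := by
      refine le_csInf ⟨_, fun _ => W x₀, fun _ y => (hW x₀ y).le, fun _ => hWrow x₀,
        fun y => by rw [← sum_mul, hPsum, one_mul], rfl⟩ ?_
      rintro d ⟨V, hV, hV1, hVi, rfl⟩
      exact relEntropy_add_mul_chiSq_sub_log_le hW hWrow hPnn hPsum hV hV1 hVi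
end

section
/- Data-processing lower bound on decoding-region probability: for any event G ⊆ Y^n (the decoding region of message i) and probability measures P = P(·) and Q = P(·|M=i) on Y^n, D(P‖Q) ≥ -ln 2 + P(Gᶜ)·ln(1/Q(Gᶜ)), and consequently Q(Gᶜ) ≥ exp( -(ln 2 + D(P‖Q)) / P(Gᶜ) ) whenever P(Gᶜ) > 0. -/
/-!
Grouping the outcomes along the partition `{G, Gᶜ}` can only decrease the divergence (the
log-sum inequality, i.e. Jensen for `x ↦ x log x`), so `D(P‖Q)` dominates the binary divergence
`d(p‖q)` of `p = P(Gᶜ)`, `q = Q(Gᶜ)`. Expanding,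
`d(p‖q) = -h(p) + p log (1/q) + (1 - p) log (1/(1 - q))`, where `h(p) ≤ log 2` and the last term
is nonnegative. Solving the resulting bound for `q` gives the exponential form.
-/

open Real Finset

section

variable {ι : Type*} (s : Finset ι) {P Q : ι → ℝ}

theorem mul_log_div_sum_le_sum_mul_log_div (hP : ∀ i ∈ s, 0 ≤ P i) (hQ : ∀ i ∈ s, 0 < Q i) :
    (∑ i ∈ s, P i) * log ((∑ i ∈ s, P i) / ∑ i ∈ s, Q i) ≤ ∑ i ∈ s, P i * log (P i / Q i) := by
  rcases s.eq_empty_or_nonempty with rfl | hs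
  · simp
  set A := ∑ i ∈ s, P i
  set B := ∑ i ∈ s, Q i
  have hB : 0 < B := sum_pos hQ hs
  have hcancel : ∀ i ∈ s, Q i * (P i / Q i) = P i := fun i hi => mul_div_cancel₀ _ (hQ i hi).ne'
  have jensen : B⁻¹ * A * log (B⁻¹ * A) ≤ B⁻¹ * ∑ i ∈ s, P i * log (P i / Q i) := by
    have := convexOn_mul_log.map_centerMass_le (fun i hi => (hQ i hi).le) hB
      (p := fun i => P i / Q i) (fun i hi => Set.mem_Ici.2 (div_nonneg (hP i hi) (hQ i hi).le))
    simp only [centerMass, Function.comp_apply, smul_eq_mul, ← mul_assoc] at this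
    have hsum : ∑ i ∈ s, Q i * (P i / Q i) * log (P i / Q i) = ∑ i ∈ s, P i * log (P i / Q i) :=
      sum_congr rfl fun i hi => by rw [hcancel i hi]
    rwa [sum_congr rfl hcancel, hsum] at this
  calc A * log (A / B) = B * (B⁻¹ * A * log (B⁻¹ * A)) := by
        rw [← div_eq_inv_mul, ← mul_assoc, mul_div_cancel₀ _ hB.ne']
    _ ≤ B * (B⁻¹ * ∑ i ∈ s, P i * log (P i / Q i)) := by gcongr
    _ = ∑ i ∈ s, P i * log (P i / Q i) := mul_inv_cancel_left₀ hB.ne' _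

theorem sum_eq_zero_of_sum_eq_zero_of_pos (hQ : ∀ i ∈ s, 0 < Q i) (h : ∑ i ∈ s, Q i = 0) :
    ∑ i ∈ s, P i = 0 := by
  rcases s.eq_empty_or_nonempty with rfl | hs
  · exact sum_empty
  · exact absurd h (sum_pos hQ hs).ne'

end

noncomputable def binKLDiv (p q : ℝ) : ℝ := p * log (p / q) + (1 - p) * log ((1 - p) / (1 - q))

-- The hypothesis makes the identity survive Lean's conventions `a / 0 = 0` and `log 0 = 0`.
theorem mul_log_div_eq {a b : ℝ} (h : b = 0 → a = 0) : a * log (a / b) = a * log a + a * log b⁻¹ := by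
  rcases eq_or_ne a 0 with rfl | ha
  · simp
  · rw [div_eq_mul_inv, log_mul ha (inv_ne_zero fun hb => ha (h hb)), mul_add]

theorem neg_log_two_add_mul_log_inv_le_binKLDiv {p q : ℝ} (hp : p ≤ 1) (hq₀ : 0 ≤ q) (hq₁ : q ≤ 1)
    (hq₀p : q = 0 → p = 0) (hq₁p : q = 1 → p = 1) :
    -log 2 + p * log q⁻¹ ≤ binKLDiv p q := by
  have hfirst := mul_log_div_eq hq₀p
  have hsecond := mul_log_div_eq (a := 1 - p) (b := 1 - q) fun h => by
    rw [hq₁p (by linarith), sub_self]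
  have hentropy := binEntropy_le_log_two (p := p)
  have hrest : 0 ≤ (1 - p) * log (1 - q)⁻¹ :=
    mul_nonneg (by linarith) (log_inv (1 - q) ▸ neg_nonneg.2 (log_nonpos (by linarith) (by linarith)))
  rw [binEntropy, log_inv, log_inv] at hentropy
  rw [binKLDiv, hfirst, hsecond]
  linarith

theorem binKLDiv_sum_compl_le_sum_mul_log_div {Ω : Type*} [Fintype Ω] [DecidableEq Ω]
    {P Q : Ω → ℝ} (hP : ∀ ω, 0 ≤ P ω) (hPsum : ∑ ω, P ω = 1) (hQ : ∀ ω, 0 < Q ω)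
    (hQsum : ∑ ω, Q ω = 1) (G : Finset Ω) :
    binKLDiv (∑ ω ∈ Gᶜ, P ω) (∑ ω ∈ Gᶜ, Q ω) ≤ ∑ ω, P ω * log (P ω / Q ω) := by
  have hPG : 1 - ∑ ω ∈ Gᶜ, P ω = ∑ ω ∈ G, P ω := by rw [← hPsum, ← sum_add_sum_compl G]; ring
  have hQG : 1 - ∑ ω ∈ Gᶜ, Q ω = ∑ ω ∈ G, Q ω := by rw [← hQsum, ← sum_add_sum_compl G]; ring
  rw [binKLDiv, hPG, hQG, ← sum_add_sum_compl G, add_comm]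
  exact add_le_add (mul_log_div_sum_le_sum_mul_log_div _ (fun ω _ => hP ω) fun ω _ => hQ ω)
    (mul_log_div_sum_le_sum_mul_log_div _ (fun ω _ => hP ω) fun ω _ => hQ ω)

theorem exp_neg_div_le_of_mul_log_inv_le {p q c : ℝ} (hp : 0 < p) (hq : 0 < q)
    (h : p * log q⁻¹ ≤ c) : exp (-c / p) ≤ q := by
  rw [← exp_log hq, exp_le_exp, div_le_iff₀ hp]
  rw [log_inv] at h
  linarith

/-- Data-processing lower bound: for probability measures `P`, `Q` on a
finite set and an event `G`,
`D(P‖Q) ≥ -ln 2 + P(Gᶜ)·ln(1/Q(Gᶜ))`, and consequently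
`Q(Gᶜ) ≥ exp(-(ln 2 + D(P‖Q))/P(Gᶜ))` whenever `P(Gᶜ) > 0`. -/
theorem stmt_8 {Ω : Type*} [Fintype Ω] [DecidableEq Ω]
    (P Q : Ω → ℝ) (hP : ∀ ω, 0 ≤ P ω) (hPsum : ∑ ω, P ω = 1)
    (hQ : ∀ ω, 0 < Q ω) (hQsum : ∑ ω, Q ω = 1)
    (G : Finset Ω) :
    (-Real.log 2 + (∑ ω ∈ Gᶜ, P ω) * Real.log (1 / ∑ ω ∈ Gᶜ, Q ω)
        ≤ ∑ ω, P ω * Real.log (P ω / Q ω))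
    ∧ (0 < ∑ ω ∈ Gᶜ, P ω →
        Real.exp (-(Real.log 2 + ∑ ω, P ω * Real.log (P ω / Q ω))
            / (∑ ω ∈ Gᶜ, P ω))
          ≤ ∑ ω ∈ Gᶜ, Q ω) := by
  set p := ∑ ω ∈ Gᶜ, P ω
  set q := ∑ ω ∈ Gᶜ, Q ω
  have hsplit : ∀ f : Ω → ℝ, ∑ ω, f ω = 1 → ∑ ω ∈ G, f ω = 1 - ∑ ω ∈ Gᶜ, f ω := fun f hf => by
    rw [← hf, ← sum_add_sum_compl G]; ring
  have hac : ∀ s : Finset Ω, ∑ ω ∈ s, Q ω = 0 → ∑ ω ∈ s, P ω = 0 := fun s =>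
    sum_eq_zero_of_sum_eq_zero_of_pos s fun ω _ => hQ ω
  have hq₀ : 0 ≤ q := sum_nonneg fun ω _ => (hQ ω).le
  have hq₀p : q = 0 → p = 0 := hac Gᶜ
  have hbound : -log 2 + p * log q⁻¹ ≤ binKLDiv p q := by
    refine neg_log_two_add_mul_log_inv_le_binKLDiv ?_ hq₀ ?_ hq₀p fun hq => ?_
    · exact hPsum ▸ sum_le_univ_sum_of_nonneg hP
    · exact hQsum ▸ sum_le_univ_sum_of_nonneg fun ω => (hQ ω).le
    · have := hac G (by rw [hsplit Q hQsum, ← hq, sub_self])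
      linarith [hsplit P hPsum]
  have hmain := hbound.trans (binKLDiv_sum_compl_le_sum_mul_log_div hP hPsum hQ hQsum G)
  refine ⟨one_div q ▸ hmain, fun hp => exp_neg_div_le_of_mul_log_inv_le hp ?_ (by linarith)⟩
  exact hq₀.lt_of_ne fun hq => hp.ne' (hq₀p hq.symm)
end
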